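/- LFI1 equals LFI3 plus the schema (cc) ∘∘α: for every set of formulas Γ and formula ψ, Γ ⊨_LFI1 ψ if and only if Γ ∪ {∘∘β : β a formula} ⊨_LFI3 ψ. -/

import Mathlib

/-- Formulas of the language with ¬, ∘, ∧, ∨, →. -/
inductive Fm : Type
  | atom : Nat → Fm
  | neg : Fm → Fm
  | circ : Fm → Fm
  | conj : Fm → Fm → Fm
  | disj : Fm → Fm → Fm
  | impl : Fm → Fm → Fm

/-- The five truth values of LFI3: T=(1,0,0), t=(1,0,1), b=(1,1,1), f=(0,1,1), F=(0,1,0). -/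
inductive V5 : Type
  | T | t | b | f | F
deriving DecidableEq

open V5

/-- Rank in the linear order F < f < b < t < T. -/
def rk : V5 → Nat
  | F => 0 | f => 1 | b => 2 | t => 3 | T => 4

/-- Infimum in the linear order F < f < b < t < T. -/
def min5 (x y : V5) : V5 := if rk x ≤ rk y then x else y

/-- Supremum in the linear order F < f < b < t < T. -/
def max5 (x y : V5) : V5 := if rk x ≤ rk y then y else x

/-- Negation: ¬(a₁,a₂,a₃) = (a₂,a₁,a₃). -/
def neg5 : V5 → V5
  | T => F | t => f | b => b | f => t | F => T

/-- Consistency: ∘(a₁,a₂,a₃) = (~(a₁∧a₂), a₃, a₃∧~(a₁∧a₂)). -/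
def circ5 : V5 → V5
  | T => T | t => b | b => F | f => b | F => T

/-- Strong negation ~a := ¬a ∧ ∘a. -/
def snd5 (x : V5) : V5 := min5 (neg5 x) (circ5 x)

/-- Implication a→b := ~a ∨ b. -/
def imp5 (x y : V5) : V5 := max5 (snd5 x) y

/-- Designated values: D = {T, t, b}. -/
def des (x : V5) : Prop := 2 ≤ rk x

/-- The valuation (homomorphism into the LFI3 algebra) extending an atom assignment. -/
def ev (v : Nat → V5) : Fm → V5
  | Fm.atom n => v n
  | Fm.neg a => neg5 (ev v a)
  | Fm.circ a => circ5 (ev v a)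
  | Fm.conj a c => min5 (ev v a) (ev v c)
  | Fm.disj a c => max5 (ev v a) (ev v c)
  | Fm.impl a c => imp5 (ev v a) (ev v c)

/-- Semantical consequence of LFI3. -/
def L3Cons (Γ : Set Fm) (ψ : Fm) : Prop :=
  ∀ v : Nat → V5, (∀ γ ∈ Γ, des (ev v γ)) → des (ev v ψ)

/-- Consequence of LFI1, given by the matrix on the subalgebra {T, b, F} of the
LFI3 algebra with designated values {T, b}. -/
def L1Cons (Γ : Set Fm) (ψ : Fm) : Prop :=
  ∀ v : Nat → V5, (∀ n, v n ∈ ({V5.T, V5.b, V5.F} : Set V5)) →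
    (∀ γ ∈ Γ, ev v γ ∈ ({V5.T, V5.b} : Set V5)) → ev v ψ ∈ ({V5.T, V5.b} : Set V5)

/-! The value `∘∘x` is designated exactly when `x ∈ {T, b, F}`, so the LFI3 valuations validating
every instance of (cc) are exactly the valuations into the subalgebra `{T, b, F}`, which are the
LFI1 valuations. On that subalgebra the LFI3-designated values `{T, t, b}` meet it in `{T, b}`,
the designated values of LFI1. -/

instance : Fintype V5 :=
  ⟨{T, t, b, f, F}, by intro x; cases x <;> simp⟩

instance : DecidablePred des := fun x => inferInstanceAs (Decidable (2 ≤ rk x))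

abbrev lfi1Values : Set V5 := {T, b, F}

lemma mem_lfi1Values {x : V5} : x ∈ lfi1Values ↔ x = T ∨ x = b ∨ x = F := by
  simp only [Set.mem_insert_iff, Set.mem_singleton_iff]

lemma des_circ5_circ5_iff (x : V5) : des (circ5 (circ5 x)) ↔ x ∈ lfi1Values := by
  rw [mem_lfi1Values]
  revert x
  decide

lemma des_iff_of_mem_lfi1Values {x : V5} (hx : x ∈ lfi1Values) :
    des x ↔ x ∈ ({T, b} : Set V5) := by
  simp only [Set.mem_insert_iff, Set.mem_singleton_iff]
  rw [mem_lfi1Values] at hx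
  revert x
  decide

lemma ev_mem_lfi1Values {v : Nat → V5} (hv : ∀ n, v n ∈ lfi1Values) (φ : Fm) :
    ev v φ ∈ lfi1Values := by
  have neg_mem : ∀ x ∈ lfi1Values, neg5 x ∈ lfi1Values := by
    simp only [mem_lfi1Values]; decide
  have circ_mem : ∀ x ∈ lfi1Values, circ5 x ∈ lfi1Values := by
    simp only [mem_lfi1Values]; decide
  have min_mem : ∀ x ∈ lfi1Values, ∀ y ∈ lfi1Values, min5 x y ∈ lfi1Values := by
    simp only [mem_lfi1Values]; decide
  have max_mem : ∀ x ∈ lfi1Values, ∀ y ∈ lfi1Values, max5 x y ∈ lfi1Values := by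
    simp only [mem_lfi1Values]; decide
  have imp_mem : ∀ x ∈ lfi1Values, ∀ y ∈ lfi1Values, imp5 x y ∈ lfi1Values := by
    simp only [mem_lfi1Values]; decide
  induction φ with
  | atom n => exact hv n
  | neg a ih => exact neg_mem _ ih
  | circ a ih => exact circ_mem _ ih
  | conj a c iha ihc => exact min_mem _ iha _ ihc
  | disj a c iha ihc => exact max_mem _ iha _ ihc
  | impl a c iha ihc => exact imp_mem _ iha _ ihc

/-- LFI1 = LFI3 + the schema (cc) ∘∘α. -/
theorem stmt11 (Γ : Set Fm) (ψ : Fm) :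
    L1Cons Γ ψ ↔ L3Cons (Γ ∪ {φ | ∃ β : Fm, φ = β.circ.circ}) ψ := by
  constructor
  · intro h v hv
    have hS : ∀ φ, ev v φ ∈ lfi1Values := fun φ =>
      (des_circ5_circ5_iff _).1 (hv _ (Or.inr ⟨φ, rfl⟩))
    refine (des_iff_of_mem_lfi1Values (hS ψ)).2 (h v (fun n => hS (.atom n)) fun γ hγ => ?_)
    exact (des_iff_of_mem_lfi1Values (hS γ)).1 (hv γ (Or.inl hγ))
  · intro h v hv hΓ
    have hS := ev_mem_lfi1Values hv
    refine (des_iff_of_mem_lfi1Values (hS ψ)).1 (h v ?_)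
    rintro γ (hγ | ⟨β, rfl⟩)
    · exact (des_iff_of_mem_lfi1Values (hS γ)).2 (hΓ γ hγ)
    · exact (des_circ5_circ5_iff _).2 (hS β)
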